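/- Let n ≥ 3 and ζ ∈ ℂ a primitive n-th root of unity. Let σ_ρ be the ℂ-algebra automorphism of ℂ[x,y,z] determined by x ↦ ζx, y ↦ ζ⁻¹y, z ↦ z, and σ_ε the ℂ-algebra automorphism determined by x ↦ y, y ↦ x, z ↦ −z. Then the subalgebra {f ∈ ℂ[x,y,z] : σ_ρ(f) = f and σ_ε(f) = f} equals the ℂ-subalgebra generated by xⁿ+yⁿ, (xⁿ−yⁿ)z, xy and z². -/

import Mathlib

/-!
A polynomial `f` fixed by the reflection `ε` is the average of `f` and `ε f`, hence a
combination of the symmetrised monomials `xᵃ yᵇ zᶜ + xᵇ yᵃ (-z)ᶜ`; invariance under the rotation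
`ρ` forces `a ≡ b [MOD n]` on every monomial of `f`. Writing `a = b + k n`, such a symmetrised
monomial is `(xy)ᵇ (z²)ᵐ (uᵏ + vᵏ)` or `(xy)ᵇ (z²)ᵐ (uᵏ - vᵏ) z` with `u = xⁿ`, `v = yⁿ`, and
these power sums lie in the algebra generated by `u + v`, `u v = (xy)ⁿ` and `(u - v) z`.
-/

open MvPolynomial

section PowerSums

variable {A S : Type*} [CommRing A] [SetLike S A] [SubringClass S A] {s : S} {u v : A}

theorem pow_add_pow_mem (hsum : u + v ∈ s) (hprod : u * v ∈ s) (k : ℕ) :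
    u ^ k + v ^ k ∈ s := by
  induction k using Nat.twoStepInduction with
  | zero =>
    rw [pow_zero, pow_zero, one_add_one_eq_two]
    exact ofNat_mem s 2
  | one => simpa using hsum
  | more k ih₀ ih₁ =>
    have h : u ^ (k + 2) + v ^ (k + 2)
        = (u + v) * (u ^ (k + 1) + v ^ (k + 1)) - u * v * (u ^ k + v ^ k) := by
      ring
    rw [h]
    exact sub_mem (mul_mem hsum ih₁) (mul_mem hprod ih₀)

theorem pow_sub_pow_mul_mem (hsum : u + v ∈ s) (hprod : u * v ∈ s) {w : A}
    (hw : (u - v) * w ∈ s) (k : ℕ) : (u ^ k - v ^ k) * w ∈ s := by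
  induction k using Nat.twoStepInduction with
  | zero => simp
  | one => simpa using hw
  | more k ih₀ ih₁ =>
    have h : (u ^ (k + 2) - v ^ (k + 2)) * w
        = (u + v) * ((u ^ (k + 1) - v ^ (k + 1)) * w) - u * v * ((u ^ k - v ^ k) * w) := by
      ring
    rw [h]
    exact sub_mem (mul_mem hsum ih₁) (mul_mem hprod ih₀)

end PowerSums

theorem coeff_aeval_C_mul_X {R σ : Type*} [CommSemiring R] (c : σ → R) (f : MvPolynomial σ R)
    (d : σ →₀ ℕ) :
    coeff d (aeval (fun i ↦ C (c i) * X i) f) = (d.prod fun i k ↦ c i ^ k) * coeff d f := by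
  classical
  induction f using MvPolynomial.induction_on' with
  | monomial e r =>
    have h : aeval (fun i ↦ C (c i) * X i) (monomial e r)
        = monomial e ((e.prod fun i k ↦ c i ^ k) * r) := by
      rw [aeval_monomial, monomial_eq, C_mul, algebraMap_eq]
      simp only [mul_pow, Finsupp.prod_mul, ← map_pow, ← map_finsuppProd]
      ring
    rw [h, coeff_monomial, coeff_monomial]
    split_ifs with hed
    · rw [hed]
    · rw [mul_zero]
  | add p q hp hq => rw [map_add, coeff_add, coeff_add, hp, hq, mul_add]

namespace DihedralInvariants

variable {R K : Type*} [CommRing R] [Field K]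

variable (R) in
def gens (n : ℕ) : Set (MvPolynomial (Fin 3) R) :=
  {X 0 ^ n + X 1 ^ n, (X 0 ^ n - X 1 ^ n) * X 2, X 0 * X 1, X 2 ^ 2}

noncomputable def rotation (ζ : K) : MvPolynomial (Fin 3) K →ₐ[K] MvPolynomial (Fin 3) K :=
  aeval ![C ζ * X 0, C ζ⁻¹ * X 1, X 2]

variable (R) in
noncomputable def reflection : MvPolynomial (Fin 3) R →ₐ[R] MvPolynomial (Fin 3) R :=
  aeval ![X 1, X 0, -X 2]

theorem reflection_eq_self_of_mem_adjoin {n : ℕ} {f : MvPolynomial (Fin 3) R}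
    (hf : f ∈ Algebra.adjoin R (gens R n)) : reflection R f = f := by
  refine (AlgHom.eqOn_adjoin_iff (ψ := AlgHom.id _ _)).mpr ?_ hf
  rintro g (rfl | rfl | rfl | rfl) <;>
    simp [reflection] <;> ring

theorem rotation_eq_self_of_mem_adjoin {n : ℕ} {ζ : K} (hζn : ζ ^ n = 1) (hζ0 : ζ ≠ 0)
    {f : MvPolynomial (Fin 3) K} (hf : f ∈ Algebra.adjoin K (gens K n)) : rotation ζ f = f := by
  have hC : (C ζ * C ζ⁻¹ : MvPolynomial (Fin 3) K) = 1 := by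
    rw [← C_mul, mul_inv_cancel₀ hζ0, C_1]
  refine (AlgHom.eqOn_adjoin_iff (ψ := AlgHom.id _ _)).mpr ?_ hf
  rintro g (rfl | rfl | rfl | rfl)
  · simp [rotation, mul_pow, ← C_pow, hζn]
  · simp [rotation, mul_pow, ← C_pow, hζn]
  · simp only [rotation, map_mul, aeval_X, Matrix.cons_val_zero, Matrix.cons_val_one,
      AlgHom.coe_id, id_eq]
    linear_combination X 0 * X 1 * hC
  · simp [rotation]

theorem X_pow_add_reflection_mem {n a b : ℕ} (c : ℕ) (h : a ≡ b [MOD n]) :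
    (X 0 ^ a * X 1 ^ b * X 2 ^ c + X 0 ^ b * X 1 ^ a * (-X 2) ^ c : MvPolynomial (Fin 3) R)
      ∈ Algebra.adjoin R (gens R n) := by
  set A := Algebra.adjoin R (gens R n)
  wlog hba : b ≤ a generalizing a b
  · have hsign : ((-1) ^ c * (-1) ^ c : MvPolynomial (Fin 3) R) = 1 := by
      rw [← mul_pow]; simp
    have h_eq : (X 0 ^ a * X 1 ^ b * X 2 ^ c + X 0 ^ b * X 1 ^ a * (-X 2) ^ c :
          MvPolynomial (Fin 3) R)
        = (-1) ^ c * (X 0 ^ b * X 1 ^ a * X 2 ^ c + X 0 ^ a * X 1 ^ b * (-X 2) ^ c) := by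
      rw [neg_pow]
      linear_combination -(X 0 ^ a * X 1 ^ b * X 2 ^ c) * hsign
    rw [h_eq]
    exact mul_mem (pow_mem (neg_mem (one_mem A)) c) (this h.symm (by omega))
  obtain ⟨k, hk⟩ := (Nat.modEq_iff_dvd' hba).mp h.symm
  obtain rfl : a = b + n * k := by omega
  have hgens : gens R n ⊆ A := Algebra.subset_adjoin
  have hsum : (X 0 ^ n + X 1 ^ n : MvPolynomial (Fin 3) R) ∈ A := hgens (by simp [gens])
  have hdiff : ((X 0 ^ n - X 1 ^ n) * X 2 : MvPolynomial (Fin 3) R) ∈ A := hgens (by simp [gens])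
  have hxy : (X 0 * X 1 : MvPolynomial (Fin 3) R) ∈ A := hgens (by simp [gens])
  have hz : (X 2 ^ 2 : MvPolynomial (Fin 3) R) ∈ A := hgens (by simp [gens])
  have hprod : (X 0 ^ n * X 1 ^ n : MvPolynomial (Fin 3) R) ∈ A := by
    simpa [mul_pow] using pow_mem hxy n
  have hfactor (m : ℕ) : ((X 0 * X 1) ^ b * (X 2 ^ 2) ^ m : MvPolynomial (Fin 3) R) ∈ A :=
    mul_mem (pow_mem hxy b) (pow_mem hz m)
  rcases Nat.even_or_odd' c with ⟨m, rfl | rfl⟩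
  · rw [(even_two_mul m).neg_pow]
    convert mul_mem (hfactor m) (pow_add_pow_mem hsum hprod k) using 1
    ring
  · rw [(odd_two_mul_add_one m).neg_pow]
    convert mul_mem (hfactor m) (pow_sub_pow_mul_mem hsum hprod hdiff k) using 1
    ring

theorem monomial_add_reflection (d : Fin 3 →₀ ℕ) (r : R) :
    monomial d r + reflection R (monomial d r)
      = C r * (X 0 ^ d 0 * X 1 ^ d 1 * X 2 ^ d 2 + X 0 ^ d 1 * X 1 ^ d 0 * (-X 2) ^ d 2) := by
  rw [reflection, aeval_monomial, monomial_eq, Finsupp.prod_pow, Finsupp.prod_pow,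
    Fin.prod_univ_three, Fin.prod_univ_three, algebraMap_eq]
  simp only [Matrix.cons_val_zero, Matrix.cons_val_one, Matrix.cons_val_two, Matrix.head_cons,
    Matrix.tail_cons]
  ring

theorem mem_adjoin_of_reflection_eq_self {n : ℕ} (h2 : (2 : K) ≠ 0)
    {f : MvPolynomial (Fin 3) K} (hε : reflection K f = f)
    (hmod : ∀ d ∈ f.support, d 0 ≡ d 1 [MOD n]) :
    f ∈ Algebra.adjoin K (gens K n) := by
  have hsum : f + reflection K f
      = ∑ d ∈ f.support, (monomial d (coeff d f) + reflection K (monomial d (coeff d f))) := by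
    conv_lhs => rw [f.as_sum]
    rw [map_sum, Finset.sum_add_distrib]
  have htwo : (2 : K) • f ∈ Algebra.adjoin K (gens K n) := by
    rw [two_smul]
    nth_rw 2 [← hε]
    rw [hsum]
    refine sum_mem fun d hd ↦ ?_
    rw [monomial_add_reflection, ← algebraMap_eq]
    exact mul_mem (Subalgebra.algebraMap_mem _ _) (X_pow_add_reflection_mem _ (hmod d hd))
  simpa [smul_smul, inv_mul_cancel₀ h2] using Subalgebra.smul_mem _ htwo (2 : K)⁻¹

theorem coeff_rotation (ζ : K) (f : MvPolynomial (Fin 3) K) (d : Fin 3 →₀ ℕ) :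
    coeff d (rotation ζ f) = ζ ^ d 0 * ζ⁻¹ ^ d 1 * coeff d f := by
  have h : ![C ζ * X 0, C ζ⁻¹ * X 1, X 2] = fun i ↦ C (![ζ, ζ⁻¹, 1] i) * X i := by
    funext i; fin_cases i <;> simp
  rw [rotation, h, coeff_aeval_C_mul_X, Finsupp.prod_pow, Fin.prod_univ_three]
  simp

theorem modEq_of_rotation_eq_self {n : ℕ} (hn : n ≠ 0) {ζ : K} (hζ : IsPrimitiveRoot ζ n)
    {f : MvPolynomial (Fin 3) K} (hρ : rotation ζ f = f) {d : Fin 3 →₀ ℕ} (hd : d ∈ f.support) :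
    d 0 ≡ d 1 [MOD n] := by
  have hweight : ζ ^ d 0 * ζ⁻¹ ^ d 1 = 1 := by
    have h := coeff_rotation ζ f d
    rw [hρ] at h
    exact mul_right_cancel₀ (mem_support_iff.mp hd) (by rw [one_mul, ← h])
  have hpow : ζ ^ d 0 = ζ ^ d 1 := by
    rwa [inv_pow, mul_inv_eq_one₀ (pow_ne_zero _ (hζ.ne_zero hn))] at hweight
  rwa [(hζ.isOfFinOrder hn).pow_eq_pow_iff_modEq, ← hζ.eq_orderOf] at hpow

theorem fixed_iff_mem_adjoin {n : ℕ} (hn : n ≠ 0) (h2 : (2 : K) ≠ 0) {ζ : K}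
    (hζ : IsPrimitiveRoot ζ n) (f : MvPolynomial (Fin 3) K) :
    rotation ζ f = f ∧ reflection K f = f ↔ f ∈ Algebra.adjoin K (gens K n) :=
  ⟨fun ⟨hρ, hε⟩ ↦
      mem_adjoin_of_reflection_eq_self h2 hε fun _ ↦ modEq_of_rotation_eq_self hn hζ hρ,
    fun hf ↦ ⟨rotation_eq_self_of_mem_adjoin hζ.pow_eq_one (hζ.ne_zero hn) hf,
      reflection_eq_self_of_mem_adjoin hf⟩⟩

end DihedralInvariants

/-- For `n ≥ 3` and a primitive `n`-th root of unity `ζ`, the subalgebra of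
`ℂ[x,y,z]` of polynomials fixed both by the substitution `x ↦ ζx, y ↦ ζ⁻¹y, z ↦ z`
and by the substitution `x ↦ y, y ↦ x, z ↦ −z` is generated by
`xⁿ+yⁿ`, `(xⁿ−yⁿ)z`, `xy` and `z²`. -/
theorem stmt6 (n : ℕ) (hn : 3 ≤ n) (ζ : ℂ) (hζ : IsPrimitiveRoot ζ n) :
    ∀ f : MvPolynomial (Fin 3) ℂ,
      (aeval ![(C ζ * X 0 : MvPolynomial (Fin 3) ℂ), C ζ⁻¹ * X 1, X 2] f = f ∧
       aeval ![(X 1 : MvPolynomial (Fin 3) ℂ), X 0, -X 2] f = f) ↔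
        f ∈ Algebra.adjoin ℂ
          ({X 0 ^ n + X 1 ^ n, (X 0 ^ n - X 1 ^ n) * X 2, X 0 * X 1, X 2 ^ 2} :
            Set (MvPolynomial (Fin 3) ℂ)) :=
  DihedralInvariants.fixed_iff_mem_adjoin (by omega) two_ne_zero hζ
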